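/- arXiv:1807.08218 — 5 statements merged into one kernel-verified Lean document; each statement's English description precedes it below -/
import Mathlib

section
/- Let S be a finite index set and let γ_j ≥ 0 and F_j ≥ 0 for each j ∈ S. Then the function R(p) = Σ_{j∈S} log₂(1 + γ_j/(1 + p·F_j)) is convex on the interval [0,∞) and is nonincreasing (antitone) on [0,∞). -/
private lemma convexOn_congr' {s : Set ℝ} {f g : ℝ → ℝ} (h : ConvexOn ℝ s g)
    (he : Set.EqOn f g s) : ConvexOn ℝ s f :=
  ⟨h.1, fun x hx y hy a b ha hb hab => by
    rw [he hx, he hy, he (h.1 hx hy ha hb hab)]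
    exact h.2 hx hy ha hb hab⟩

private lemma antitoneOn_add' {s : Set ℝ} {f g : ℝ → ℝ} (hf : AntitoneOn f s)
    (hg : AntitoneOn g s) : AntitoneOn (fun p => f p + g p) s :=
  fun x hx y hy hxy => add_le_add (hf hx hy hxy) (hg hx hy hxy)

private lemma term_props (γ F : ℝ) (hγ : 0 ≤ γ) (hF : 0 ≤ F) :
    ConvexOn ℝ (Set.Ici (0 : ℝ)) (fun p => Real.logb 2 (1 + γ / (1 + p * F))) ∧
      AntitoneOn (fun p => Real.logb 2 (1 + γ / (1 + p * F))) (Set.Ici (0 : ℝ)) := by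
  set a : ℝ := 1 + γ with ha
  have ha1 : (1 : ℝ) ≤ a := by simp [ha]; linarith
  set g : ℝ → ℝ := fun p => (Real.log (a + p * F) - Real.log (1 + p * F)) / Real.log 2 with hgdef
  set d : ℝ → ℝ := fun p => (F / (a + p * F) - F / (1 + p * F)) / Real.log 2 with hddef
  have hlog2 : (0 : ℝ) < Real.log 2 := Real.log_pos (by norm_num)
  have hpos : ∀ p : ℝ, 0 ≤ p → 0 < 1 + p * F := fun p hp => by nlinarith
  have hposa : ∀ p : ℝ, 0 ≤ p → 0 < a + p * F := fun p hp => by nlinarith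
  -- equality of the functions on [0, ∞)
  have heq : Set.EqOn (fun p => Real.logb 2 (1 + γ / (1 + p * F))) g (Set.Ici 0) := by
    intro p hp
    have h1 := hpos p hp
    have h2 := hposa p hp
    have hval : 1 + γ / (1 + p * F) = (a + p * F) / (1 + p * F) := by
      field_simp [ha]; ring
    simp only [Real.logb, hval, Real.log_div h2.ne' h1.ne', hgdef]
  -- linear inner function derivative
  have hlin : ∀ (c p : ℝ), HasDerivAt (fun q => c + q * F) F p := fun c p => by
    simpa using ((hasDerivAt_id p).mul_const F).const_add c
  -- derivative of g
  have hg' : ∀ p : ℝ, 0 ≤ p → HasDerivAt g (d p) p := by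
    intro p hp
    have h1 : HasDerivAt (fun q => Real.log (a + q * F)) (F / (a + p * F)) p :=
      (hlin a p).log (hposa p hp).ne'
    have h2 : HasDerivAt (fun q => Real.log (1 + q * F)) (F / (1 + p * F)) p :=
      (hlin 1 p).log (hpos p hp).ne'
    exact (h1.sub h2).div_const _
  -- derivative of d
  have hd' : ∀ p : ℝ, 0 ≤ p →
      HasDerivAt d ((F * F / (1 + p * F) ^ 2 - F * F / (a + p * F) ^ 2) / Real.log 2) p := by
    intro p hp
    have h1 : HasDerivAt (fun q => F / (a + q * F))
        ((0 * (a + p * F) - F * F) / (a + p * F) ^ 2) p :=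
      (hasDerivAt_const p F).div (hlin a p) (hposa p hp).ne'
    have h2 : HasDerivAt (fun q => F / (1 + q * F))
        ((0 * (1 + p * F) - F * F) / (1 + p * F) ^ 2) p :=
      (hasDerivAt_const p F).div (hlin 1 p) (hpos p hp).ne'
    have := (h1.sub h2).div_const (Real.log 2)
    exact this.congr_deriv (by ring)
  -- continuity of g on [0, ∞)
  have hgcont : ContinuousOn g (Set.Ici 0) := fun p hp =>
    ((hg' p hp).continuousAt).continuousWithinAt
  -- differentiability of g on interior
  have hgdiff : DifferentiableOn ℝ g (interior (Set.Ici (0 : ℝ))) := by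
    intro p hp
    rw [interior_Ici] at hp
    exact ((hg' p (le_of_lt hp)).differentiableAt).differentiableWithinAt
  -- deriv g = d eventually near any interior point, hence on interior
  have hderiv_eq : ∀ p ∈ Set.Ioi (0 : ℝ), Set.EqOn (deriv g) d (Set.Ioi 0) := by
    intro p _ q hq
    exact (hg' q (le_of_lt hq)).deriv
  have hd_ev : ∀ p ∈ Set.Ioi (0 : ℝ), deriv g =ᶠ[nhds p] d := by
    intro p hp
    filter_upwards [isOpen_Ioi.mem_nhds hp] with q hq
    exact (hg' q (le_of_lt hq)).deriv
  -- convexity of g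
  have hgconv : ConvexOn ℝ (Set.Ici 0) g := by
    apply convexOn_of_deriv2_nonneg (convex_Ici 0) hgcont hgdiff
    · intro p hp
      rw [interior_Ici] at hp
      have : DifferentiableAt ℝ d p := (hd' p (le_of_lt hp)).differentiableAt
      exact ((hd_ev p hp).differentiableAt_iff.mpr this).differentiableWithinAt
    · intro p hp
      rw [interior_Ici] at hp
      have hrw : deriv (deriv g) p = deriv d p := (hd_ev p hp).deriv_eq
      have hdv : deriv d p = (F * F / (1 + p * F) ^ 2 - F * F / (a + p * F) ^ 2) / Real.log 2 :=
        (hd' p (le_of_lt hp)).deriv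
      have h1 := hpos p (le_of_lt hp)
      have h2 := hposa p (le_of_lt hp)
      have hle : 1 + p * F ≤ a + p * F := by linarith
      have hsq : (1 + p * F) ^ 2 ≤ (a + p * F) ^ 2 := by nlinarith
      have hnum : F * F / (a + p * F) ^ 2 ≤ F * F / (1 + p * F) ^ 2 :=
        div_le_div_of_nonneg_left (mul_nonneg hF hF) (by positivity) hsq
      simp only [Function.iterate_succ, Function.iterate_zero, Function.comp_apply, id_eq]
      rw [hrw, hdv]
      apply div_nonneg _ hlog2.le
      linarith
  -- antitonicity of g
  have hganti : AntitoneOn g (Set.Ici 0) := by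
    apply antitoneOn_of_deriv_nonpos (convex_Ici 0) hgcont hgdiff
    intro p hp
    rw [interior_Ici] at hp
    rw [(hg' p (le_of_lt hp)).deriv]
    have h1 := hpos p (le_of_lt hp)
    have h2 := hposa p (le_of_lt hp)
    have hle : F / (a + p * F) ≤ F / (1 + p * F) :=
      div_le_div_of_nonneg_left hF h1 (by linarith)
    apply div_nonpos_of_nonpos_of_nonneg _ hlog2.le
    · linarith
  exact ⟨convexOn_congr' hgconv heq, hganti.congr heq.symm⟩

/-- The co-channel ground UEs' sum-rate `R(p) = Σ_j log₂(1 + γ_j/(1 + p F_j))`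
is convex and nonincreasing on `[0, ∞)`. -/
theorem ground_sum_rate_convex_antitone {ι : Type*} (S : Finset ι) (γ F : ι → ℝ)
    (hγ : ∀ j ∈ S, 0 ≤ γ j) (hF : ∀ j ∈ S, 0 ≤ F j) :
    ConvexOn ℝ (Set.Ici (0 : ℝ))
        (fun p => ∑ j ∈ S, Real.logb 2 (1 + γ j / (1 + p * F j))) ∧
      AntitoneOn (fun p => ∑ j ∈ S, Real.logb 2 (1 + γ j / (1 + p * F j)))
        (Set.Ici (0 : ℝ)) := by
  classical
  induction S using Finset.induction_on with
  | empty =>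
    simp only [Finset.sum_empty]
    exact ⟨convexOn_const 0 (convex_Ici 0), antitoneOn_const⟩
  | @insert j T hj ih =>
    have hterm := term_props (γ j) (F j) (hγ j (Finset.mem_insert_self j T))
      (hF j (Finset.mem_insert_self j T))
    have hrest := ih (fun i hi => hγ i (Finset.mem_insert_of_mem hi))
      (fun i hi => hF i (Finset.mem_insert_of_mem hi))
    simp only [Finset.sum_insert hj]
    exact ⟨hterm.1.add hrest.1, antitoneOn_add' hterm.2 hrest.2⟩
end

section
/- Let N be a finite set, and for each n ∈ N let F_n > 0, c_n ≥ 0, and let μ_u > 0 and P_max > 0. Consider maximizing G(p) = μ_u·Σ_{n∈N} log₂(1 + p_n·F_n) − Σ_{n∈N} c_n·p_n over the feasible set {p : p_n ≥ 0 for all n, Σ_{n∈N} p_n ≤ P_max}. Suppose ν > 0 is such that the allocation p*_n = max(0, μ_u/((c_n + ν)·ln 2) − 1/F_n) satisfies Σ_{n∈N} p*_n = P_max. Then (p*_n)_{n∈N} is a global maximizer of G over the feasible set. -/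
private lemma single_rb (F c μu ν x : ℝ) (hF : 0 < F) (hc : 0 ≤ c) (hμu : 0 < μu)
    (hν : 0 < ν) (hx : 0 ≤ x) :
    μu * Real.logb 2 (1 + x * F) - (c + ν) * x ≤
      μu * Real.logb 2 (1 + max 0 (μu / ((c + ν) * Real.log 2) - 1 / F) * F)
        - (c + ν) * max 0 (μu / ((c + ν) * Real.log 2) - 1 / F) := by
  have hLpos : 0 < Real.log 2 := Real.log_pos (by norm_num)
  set L := Real.log 2 with hL
  have hcν : 0 < c + ν := by linarith
  set xs := max 0 (μu / ((c + ν) * L) - 1 / F) with hxs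
  have hxs0 : 0 ≤ xs := le_max_left _ _
  have ha : 0 < 1 + x * F := by nlinarith
  have hb : 0 < 1 + xs * F := by nlinarith
  have htan : Real.log (1 + x * F) - Real.log (1 + xs * F) ≤
      (x - xs) * F / (1 + xs * F) := by
    have h1 : Real.log ((1 + x * F) / (1 + xs * F)) ≤ (1 + x * F) / (1 + xs * F) - 1 :=
      Real.log_le_sub_one_of_pos (by positivity)
    rw [Real.log_div (ne_of_gt ha) (ne_of_gt hb)] at h1
    have h2 : (1 + x * F) / (1 + xs * F) - 1 = (x - xs) * F / (1 + xs * F) := by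
      field_simp
      ring
    linarith
  simp only [Real.logb, ← hL]
  rcases le_or_gt (μu / ((c + ν) * L) - 1 / F) 0 with h0 | h0
  · have hxse : xs = 0 := max_eq_left h0
    rw [hxse] at htan ⊢
    simp only [zero_mul, add_zero, Real.log_one, mul_zero, sub_zero] at htan ⊢
    -- from h0 : μu/((c+ν)L) ≤ 1/F, get μu * F ≤ (c+ν) * L
    have hμF : μu * F ≤ (c + ν) * L := by
      have h0' : μu / ((c + ν) * L) ≤ 1 / F := by linarith
      rw [div_le_div_iff₀ (by positivity) hF] at h0'
      nlinarith
    have hlog : Real.log (1 + x * F) ≤ x * F := by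
      have : (x - 0) * F / 1 = x * F := by ring
      linarith [htan, this]
    have h3 : μu * (Real.log (1 + x * F) / L) ≤ μu * (x * F) / L := by
      rw [mul_div_assoc]
      gcongr
    have h4 : μu * (x * F) / L ≤ (c + ν) * x := by
      rw [div_le_iff₀ hLpos]
      nlinarith
    simp only [zero_div, mul_zero]
    linarith
  · have hxse : xs = μu / ((c + ν) * L) - 1 / F := max_eq_right (le_of_lt h0)
    have hbeq : 1 + xs * F = μu * F / ((c + ν) * L) := by
      rw [hxse]; field_simp; ring
    have hslope : μu / L * ((x - xs) * F / (1 + xs * F)) = (c + ν) * (x - xs) := by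
      rw [hbeq]; field_simp
    have h3 : μu / L * (Real.log (1 + x * F) - Real.log (1 + xs * F)) ≤
        μu / L * ((x - xs) * F / (1 + xs * F)) := by
      apply mul_le_mul_of_nonneg_left htan (by positivity)
    rw [hslope] at h3
    have e1 : μu * (Real.log (1 + x * F) / L) = μu / L * Real.log (1 + x * F) := by ring
    have e2 : μu * (Real.log (1 + xs * F) / L) = μu / L * Real.log (1 + xs * F) := by ring
    rw [e1, e2]
    linarith [mul_sub (μu / L) (Real.log (1 + x * F)) (Real.log (1 + xs * F)) ▸ h3]

/-- If `ν > 0` is a water level such that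
`p*_n = max(0, μ_u/((c_n + ν) ln 2) − 1/F_n)` exhausts the power budget `P_max`, then
`p*` globally maximizes `G(p) = μ_u Σ_n log₂(1 + p_n F_n) − Σ_n c_n p_n` over the
feasible set. -/
theorem sca_subproblem_case2_optimal {ι : Type*} (N : Finset ι) (F c : ι → ℝ)
    (hF : ∀ n ∈ N, 0 < F n) (hc : ∀ n ∈ N, 0 ≤ c n)
    (μu Pmax : ℝ) (hμu : 0 < μu) (hPmax : 0 < Pmax)
    (ν : ℝ) (hν : 0 < ν) (pstar : ι → ℝ)
    (hpstar : ∀ n ∈ N, pstar n = max 0 (μu / ((c n + ν) * Real.log 2) - 1 / F n))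
    (hbudget : ∑ n ∈ N, pstar n = Pmax) :
    ∀ p : ι → ℝ, (∀ n ∈ N, 0 ≤ p n) → ∑ n ∈ N, p n ≤ Pmax →
      μu * ∑ n ∈ N, Real.logb 2 (1 + p n * F n) - ∑ n ∈ N, c n * p n ≤
        μu * ∑ n ∈ N, Real.logb 2 (1 + pstar n * F n) - ∑ n ∈ N, c n * pstar n := by
  intro p hp hsum
  have expand : ∀ q : ι → ℝ,
      μu * ∑ n ∈ N, Real.logb 2 (1 + q n * F n) - ∑ n ∈ N, c n * q n
      = ∑ n ∈ N, (μu * Real.logb 2 (1 + q n * F n) - (c n + ν) * q n)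
        + ν * ∑ n ∈ N, q n := by
    intro q
    rw [Finset.mul_sum, Finset.mul_sum, ← Finset.sum_sub_distrib, ← Finset.sum_add_distrib]
    exact Finset.sum_congr rfl (fun n _ => by ring)
  rw [expand p, expand pstar]
  have hterm : ∑ n ∈ N, (μu * Real.logb 2 (1 + p n * F n) - (c n + ν) * p n) ≤
      ∑ n ∈ N, (μu * Real.logb 2 (1 + pstar n * F n) - (c n + ν) * pstar n) := by
    apply Finset.sum_le_sum
    intro n hn
    rw [hpstar n hn]
    exact single_rb (F n) (c n) μu ν (p n) (hF n hn) (hc n hn) hμu hν (hp n hn)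
  have hν' : ν * ∑ n ∈ N, p n ≤ ν * ∑ n ∈ N, pstar n := by
    rw [hbudget]
    exact mul_le_mul_of_nonneg_left hsum (le_of_lt hν)
  linarith
end

section
/- Fix a finite set N; for each n ∈ N let F_n ≥ 0, let J(n) be a finite set with γ_j(n) ≥ 0 and F_j(n) ≥ 0 for j ∈ J(n), let μ_u ≥ 0, μ_g ≥ 0, P_max ≥ 0, and let C = {p : p_n ≥ 0 for all n, Σ_{n∈N} p_n ≤ P_max}. Define Q(p) = μ_u·Σ_{n∈N} log₂(1 + p_n·F_n) + μ_g·Σ_{n∈N} Σ_{j∈J(n)} log₂(1 + γ_j(n)/(1 + p_n·F_j(n))). Given p^{(r)} ∈ C, define the surrogate S(p) = μ_u·Σ_{n∈N} log₂(1 + p_n·F_n) + μ_g·(A^{(r)} − Σ_{n∈N} B_n^{(r)}·(p_n − p_n^{(r)})), where A^{(r)} = Σ_{n∈N} Σ_{j∈J(n)} log₂(1 + γ_j(n)/(1 + p_n^{(r)}·F_j(n))) and B_n^{(r)} = Σ_{j∈J(n)} F_j(n)·γ_j(n) / ((ln 2)·(1 + p_n^{(r)}·F_j(n) + γ_j(n))·(1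 + p_n^{(r)}·F_j(n))). If p⁺ ∈ C satisfies S(p⁺) ≥ S(p) for all p ∈ C, then Q(p⁺) ≥ Q(p^{(r)}). -/
lemma log_key_sca (γ u v : ℝ) (hγ : 0 ≤ γ) (hu : 0 < u) (hv : 0 < v) :
    Real.log (1 + γ / v) - γ * (u - v) / ((v + γ) * v) ≤ Real.log (1 + γ / u) := by
  have h1 : (0:ℝ) < u + γ := by linarith
  have h2 : (0:ℝ) < v + γ := by linarith
  have e1 : 1 + γ / u = (u + γ) / u := by field_simp
  have e2 : 1 + γ / v = (v + γ) / v := by field_simp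
  rw [e1, e2, Real.log_div h1.ne' hu.ne', Real.log_div h2.ne' hv.ne']
  -- use log x ≤ x - 1 with x = ((v+γ)*u)/((u+γ)*v)
  have hx : (0:ℝ) < ((v + γ) * u) / ((u + γ) * v) := by positivity
  have hlog := Real.log_le_sub_one_of_pos hx
  have hsplit : Real.log (((v + γ) * u) / ((u + γ) * v)) =
      Real.log (v + γ) + Real.log u - (Real.log (u + γ) + Real.log v) := by
    rw [Real.log_div (by positivity) (by positivity), Real.log_mul h2.ne' hu.ne',
      Real.log_mul h1.ne' hv.ne']
  rw [hsplit] at hlog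
  have halg : ((v + γ) * u) / ((u + γ) * v) - 1 ≤ γ * (u - v) / ((v + γ) * v) := by
    rw [div_sub_one (by positivity), div_le_div_iff₀ (by positivity) (by positivity)]
    nlinarith [mul_nonneg (mul_nonneg hγ (sq_nonneg (u - v))) hv.le]
  linarith

lemma logb_key_sca (γ F a b : ℝ) (hγ : 0 ≤ γ) (hF : 0 ≤ F) (ha : 0 ≤ a) (hb : 0 ≤ b) :
    Real.logb 2 (1 + γ / (1 + b * F)) -
        F * γ / (Real.log 2 * (1 + b * F + γ) * (1 + b * F)) * (a - b)
      ≤ Real.logb 2 (1 + γ / (1 + a * F)) := by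
  have hu : 0 < 1 + a * F := by positivity
  have hv : 0 < 1 + b * F := by positivity
  have hl2 : 0 < Real.log 2 := Real.log_pos one_lt_two
  have hlog := log_key_sca γ (1 + a * F) (1 + b * F) hγ hu hv
  have heq : F * γ / (Real.log 2 * (1 + b * F + γ) * (1 + b * F)) * (a - b)
      = γ * ((1 + a * F) - (1 + b * F)) / (((1 + b * F) + γ) * (1 + b * F)) / Real.log 2 := by
    have h2 : (0:ℝ) < 1 + b * F + γ := by linarith
    field_simp
    ring
  simp only [Real.logb, heq, ← sub_div]
  gcongr


/-- Monotone improvement of the SCA iteration: if `p⁺` maximizes the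
surrogate `S` (Taylor under-estimator of the ground sum-rate at the current iterate
`p⁽ʳ⁾`) over the feasible set `C`, then the true objective does not decrease:
`Q(p⁺) ≥ Q(p⁽ʳ⁾)`. -/
theorem sca_monotone_improvement {ι κ : Type*} (N : Finset ι) (Fu : ι → ℝ)
    (hFu : ∀ n ∈ N, 0 ≤ Fu n) (Jocc : ι → Finset κ) (γ F : κ → ι → ℝ)
    (hγ : ∀ n ∈ N, ∀ j ∈ Jocc n, 0 ≤ γ j n)
    (hF : ∀ n ∈ N, ∀ j ∈ Jocc n, 0 ≤ F j n)
    (μu μg Pmax : ℝ) (hμu : 0 ≤ μu) (hμg : 0 ≤ μg) (hPmax : 0 ≤ Pmax)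
    (C : Set (ι → ℝ))
    (hC : C = {p : ι → ℝ | (∀ n ∈ N, 0 ≤ p n) ∧ ∑ n ∈ N, p n ≤ Pmax})
    (Q : (ι → ℝ) → ℝ)
    (hQ : ∀ p, Q p =
      μu * ∑ n ∈ N, Real.logb 2 (1 + p n * Fu n) +
        μg * ∑ n ∈ N, ∑ j ∈ Jocc n, Real.logb 2 (1 + γ j n / (1 + p n * F j n)))
    (pr : ι → ℝ) (hpr : pr ∈ C)
    (S : (ι → ℝ) → ℝ)
    (hS : ∀ p, S p =
      μu * ∑ n ∈ N, Real.logb 2 (1 + p n * Fu n) +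
        μg * ((∑ n ∈ N, ∑ j ∈ Jocc n, Real.logb 2 (1 + γ j n / (1 + pr n * F j n))) -
          ∑ n ∈ N,
            (∑ j ∈ Jocc n,
                F j n * γ j n /
                  (Real.log 2 * (1 + pr n * F j n + γ j n) * (1 + pr n * F j n))) *
              (p n - pr n)))
    (pplus : ι → ℝ) (hpplus : pplus ∈ C) (hmax : ∀ p ∈ C, S p ≤ S pplus) :
    Q pr ≤ Q pplus := by
  subst hC
  obtain ⟨hpr0, hpr1⟩ := hpr
  obtain ⟨hpp0, -⟩ := hpplus
  have ground : ∀ p : ι → ℝ, (∀ n ∈ N, 0 ≤ p n) →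
      (∑ n ∈ N, ∑ j ∈ Jocc n, Real.logb 2 (1 + γ j n / (1 + pr n * F j n))) -
        ∑ n ∈ N,
          (∑ j ∈ Jocc n,
              F j n * γ j n /
                (Real.log 2 * (1 + pr n * F j n + γ j n) * (1 + pr n * F j n))) *
            (p n - pr n)
      ≤ ∑ n ∈ N, ∑ j ∈ Jocc n, Real.logb 2 (1 + γ j n / (1 + p n * F j n)) := by
    intro p hp
    rw [← Finset.sum_sub_distrib]
    apply Finset.sum_le_sum
    intro n hn
    rw [Finset.sum_mul, ← Finset.sum_sub_distrib]
    apply Finset.sum_le_sum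
    intro j hj
    exact logb_key_sca (γ j n) (F j n) (p n) (pr n) (hγ n hn j hj) (hF n hn j hj)
      (hp n hn) (hpr0 n hn)
  have hSQ : ∀ p : ι → ℝ, (∀ n ∈ N, 0 ≤ p n) → S p ≤ Q p := by
    intro p hp
    rw [hS, hQ]
    exact add_le_add le_rfl (mul_le_mul_of_nonneg_left (ground p hp) hμg)
  have hSpr : S pr = Q pr := by
    rw [hS, hQ]
    simp
  calc Q pr = S pr := hSpr.symm
    _ ≤ S pplus := hmax pr ⟨hpr0, hpr1⟩
    _ ≤ Q pplus := hSQ pplus hpp0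
end

section
/- Let S be a finite index set, γ_j ≥ 0 and F_j ≥ 0 for j ∈ S, and let μ_u > 0, μ_g ≥ 0, F > 0 and ν > 0. Define h(p) = μ_u·log₂(1 + p·F) + μ_g·Σ_{j∈S} log₂(1 + γ_j/(1 + p·F_j)) − ν·p for p ≥ 0. If p^D ≥ 0 satisfies h(p^D) ≥ h(p) for all p ≥ 0, then p^D ≤ p̂, where p̂ = max(0, μ_u/(ν·ln 2) − 1/F). -/
/-- Any maximizer `p^D` of the per-RB dual subproblem objective
`h(p) = μ_u log₂(1 + p F) + μ_g Σ_j log₂(1 + γ_j/(1 + p F_j)) − ν p` over `[0, ∞)` is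
upper-bounded by the water-filling level `p̂ = max(0, μ_u/(ν ln 2) − 1/F)`. -/
theorem dual_subproblem_maximizer_upper_bound {ι : Type*} (S : Finset ι) (γ F : ι → ℝ)
    (hγ : ∀ j ∈ S, 0 ≤ γ j) (hF : ∀ j ∈ S, 0 ≤ F j)
    (μu μg Fc ν : ℝ) (hμu : 0 < μu) (hμg : 0 ≤ μg) (hFc : 0 < Fc) (hν : 0 < ν)
    (h : ℝ → ℝ)
    (hh : ∀ p, h p =
      μu * Real.logb 2 (1 + p * Fc) +
        μg * ∑ j ∈ S, Real.logb 2 (1 + γ j / (1 + p * F j)) - ν * p)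
    (pD : ℝ) (hpD : 0 ≤ pD) (hmax : ∀ p : ℝ, 0 ≤ p → h p ≤ h pD) :
    pD ≤ max 0 (μu / (ν * Real.log 2) - 1 / Fc) := by
  by_contra hcon
  push_neg at hcon
  set P := max 0 (μu / (ν * Real.log 2) - 1 / Fc) with hPdef
  have hP0 : 0 ≤ P := le_max_left _ _
  have hlt : P < pD := hcon
  have hlog2 : 0 < Real.log 2 := Real.log_pos one_lt_two
  have hPpos : 0 < 1 + P * Fc := by positivity
  have hDpos : 0 < 1 + pD * Fc := by nlinarith
  -- key: μu * Fc ≤ ν * log 2 * (1 + P * Fc)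
  have hkey' : μu * Fc ≤ ν * Real.log 2 * (1 + P * Fc) := by
    have h1 : μu / (ν * Real.log 2) - 1 / Fc ≤ P := le_max_right _ _
    have h2 : (μu / (ν * Real.log 2) - 1 / Fc) * Fc ≤ P * Fc :=
      mul_le_mul_of_nonneg_right h1 hFc.le
    have h3 : (μu / (ν * Real.log 2) - 1 / Fc) * Fc
        = μu * Fc / (ν * Real.log 2) - 1 := by
      field_simp
    rw [h3] at h2
    have h4 : μu * Fc / (ν * Real.log 2) ≤ 1 + P * Fc := by linarith
    rw [div_le_iff₀ (by positivity)] at h4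
    linarith
  set x := (pD - P) * Fc / (1 + P * Fc) with hxdef
  have hx : 0 < x := div_pos (mul_pos (sub_pos.2 hlt) hFc) hPpos
  have hratio : (1 + pD * Fc) = (1 + P * Fc) * (1 + x) := by
    rw [hxdef]
    field_simp
    ring
  have hlogA : Real.log (1 + pD * Fc) - Real.log (1 + P * Fc) < x := by
    rw [hratio, Real.log_mul hPpos.ne' (by positivity)]
    have hxx : Real.log (1 + x) < x := by
      rw [Real.log_lt_iff_lt_exp (by linarith)]
      have := Real.add_one_lt_exp hx.ne'
      linarith
    linarith
  -- first term strict inequality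
  have hA : μu * (Real.logb 2 (1 + pD * Fc) - Real.logb 2 (1 + P * Fc)) < ν * (pD - P) := by
    have e1 : Real.logb 2 (1 + pD * Fc) - Real.logb 2 (1 + P * Fc)
        = (Real.log (1 + pD * Fc) - Real.log (1 + P * Fc)) / Real.log 2 := by
      unfold Real.logb; ring
    rw [e1]
    have h5 : μu * ((Real.log (1 + pD * Fc) - Real.log (1 + P * Fc)) / Real.log 2)
        < μu * (x / Real.log 2) := by
      apply mul_lt_mul_of_pos_left _ hμu
      exact div_lt_div_of_pos_right hlogA hlog2
    have h6 : μu * (x / Real.log 2) ≤ ν * (pD - P) := by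
      have e2 : μu * (x / Real.log 2) = μu * ((pD - P) * Fc) / ((1 + P * Fc) * Real.log 2) := by
        rw [hxdef]; field_simp
      rw [e2, div_le_iff₀ (by positivity)]
      nlinarith [mul_le_mul_of_nonneg_right hkey' (sub_pos.2 hlt).le]
    linarith
  -- interference term is nonincreasing
  have hB : ∑ j ∈ S, Real.logb 2 (1 + γ j / (1 + pD * F j))
      ≤ ∑ j ∈ S, Real.logb 2 (1 + γ j / (1 + P * F j)) := by
    apply Finset.sum_le_sum
    intro j hj
    have hFj := hF j hj
    have hγj := hγ j hj
    have hd1 : (0:ℝ) < 1 + P * F j := by positivity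
    have hd2 : (0:ℝ) < 1 + pD * F j := by nlinarith
    apply Real.logb_le_logb_of_le one_lt_two (by positivity)
    have hdd : γ j / (1 + pD * F j) ≤ γ j / (1 + P * F j) := by
      apply div_le_div_of_nonneg_left hγj hd1
      nlinarith
    linarith
  have hmaxP := hmax P hP0
  rw [hh P, hh pD] at hmaxP
  nlinarith [mul_le_mul_of_nonneg_left hB hμg]
end

section
/- Let S be a finite index set, γ_j ≥ 0 and F_j ≥ 0 for j ∈ S, and let μ_u > 0, μ_g ≥ 0, F > 0 and ν > 0. Define h(p) = μ_u·log₂(1 + p·F) + μ_g·Σ_{j∈S} log₂(1 + γ_j/(1 + p·F_j)) − ν·p, and p̂ = max(0, μ_u/(ν·ln 2) − 1/F). If p^D ≥ 0 satisfies h(p^D) ≥ h(p) for all p ≥ 0, then (1 + p^D·F)^{μ_u} ≤ (1 + p̂·F)^{μ_u} and 2^{−ν·p^D} · Π_{j∈S} (1 + γ_j/(1 + p^D·F_j))^{μ_g} ≤ Π_{j∈S} (1 + γ_j)^{μ_g}. -/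
/-- The slack-variable point of the reformulated problem (29) evaluated at
any maximizer `p^D` of the dual subproblem objective `h` is componentwise dominated by
the initialization vertex `z⁽⁰⁾ = ((1 + p̂ F)^{μ_u}, Π_j (1 + γ_j)^{μ_g})`. -/
theorem opa_initial_box_dominates {ι : Type*} (S : Finset ι) (γ F : ι → ℝ)
    (hγ : ∀ j ∈ S, 0 ≤ γ j) (hF : ∀ j ∈ S, 0 ≤ F j)
    (μu μg Fc ν : ℝ) (hμu : 0 < μu) (hμg : 0 ≤ μg) (hFc : 0 < Fc) (hν : 0 < ν)
    (h : ℝ → ℝ)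
    (hh : ∀ p, h p =
      μu * Real.logb 2 (1 + p * Fc) +
        μg * ∑ j ∈ S, Real.logb 2 (1 + γ j / (1 + p * F j)) - ν * p)
    (phat : ℝ) (hphat : phat = max 0 (μu / (ν * Real.log 2) - 1 / Fc))
    (pD : ℝ) (hpD : 0 ≤ pD) (hmax : ∀ p : ℝ, 0 ≤ p → h p ≤ h pD) :
    (1 + pD * Fc) ^ μu ≤ (1 + phat * Fc) ^ μu ∧
      (2 : ℝ) ^ (-(ν * pD)) * ∏ j ∈ S, (1 + γ j / (1 + pD * F j)) ^ μg ≤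
        ∏ j ∈ S, (1 + γ j) ^ μg := by
  have hL2 : 0 < Real.log 2 := Real.log_pos one_lt_two
  have hphat0 : 0 ≤ phat := by rw [hphat]; exact le_max_left _ _
  have hA0 : (0:ℝ) < 1 + phat * Fc := by nlinarith
  have hB0 : (0:ℝ) < 1 + pD * Fc := by nlinarith
  have hAge : μu * Fc ≤ ν * Real.log 2 * (1 + phat * Fc) := by
    have h1 : μu / (ν * Real.log 2) - 1 / Fc ≤ phat := by
      rw [hphat]; exact le_max_right _ _
    have hνL : 0 < ν * Real.log 2 := by positivity
    rw [div_sub_div _ _ (ne_of_gt hνL) (ne_of_gt hFc), div_le_iff₀ (by positivity)] at h1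
    nlinarith
  have hpDle : pD ≤ phat := by
    by_contra hgt
    push_neg at hgt
    -- the interference sum is nonincreasing in p
    have claim1 : μg * ∑ j ∈ S, Real.logb 2 (1 + γ j / (1 + pD * F j)) ≤
        μg * ∑ j ∈ S, Real.logb 2 (1 + γ j / (1 + phat * F j)) := by
      apply mul_le_mul_of_nonneg_left _ hμg
      apply Finset.sum_le_sum
      intro j hj
      have hFj := hF j hj
      have hγj := hγ j hj
      have hd1 : (0:ℝ) < 1 + phat * F j := by nlinarith
      have hd2 : (0:ℝ) < 1 + pD * F j := by nlinarith
      have hdd : 1 + phat * F j ≤ 1 + pD * F j := by nlinarith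
      have hx2 : (0:ℝ) < 1 + γ j / (1 + pD * F j) := by positivity
      apply Real.logb_le_logb_of_le one_lt_two hx2
      have : γ j / (1 + pD * F j) ≤ γ j / (1 + phat * F j) :=
        div_le_div_of_nonneg_left hγj hd1 hdd
      linarith
    -- strict decrease of the first term minus ν p
    have hlog : Real.log ((1 + pD * Fc) / (1 + phat * Fc)) <
        (1 + pD * Fc) / (1 + phat * Fc) - 1 := by
      apply Real.log_lt_sub_one_of_pos (div_pos hB0 hA0)
      apply ne_of_gt
      rw [lt_div_iff₀ hA0]
      nlinarith
    have hdiff : Real.logb 2 (1 + pD * Fc) - Real.logb 2 (1 + phat * Fc) =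
        Real.log ((1 + pD * Fc) / (1 + phat * Fc)) / Real.log 2 := by
      rw [Real.log_div hB0.ne' hA0.ne']
      simp [Real.logb, sub_div]
    have hsub : (1 + pD * Fc) / (1 + phat * Fc) - 1 = Fc * (pD - phat) / (1 + phat * Fc) := by
      field_simp
      ring
    have hlog2 : Real.log ((1 + pD * Fc) / (1 + phat * Fc)) * (1 + phat * Fc) <
        Fc * (pD - phat) := by
      rw [hsub] at hlog
      have := (mul_lt_mul_of_pos_right hlog hA0)
      rwa [div_mul_cancel₀ _ hA0.ne'] at this
    have claim2 : μu * Real.logb 2 (1 + pD * Fc) <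
        μu * Real.logb 2 (1 + phat * Fc) + ν * (pD - phat) := by
      have key : μu * (Real.log ((1 + pD * Fc) / (1 + phat * Fc)) * (1 + phat * Fc)) <
          ν * Real.log 2 * (1 + phat * Fc) * (pD - phat) := by
        nlinarith
      have hLA : 0 < Real.log 2 * (1 + phat * Fc) := by positivity
      have : μu * (Real.logb 2 (1 + pD * Fc) - Real.logb 2 (1 + phat * Fc)) <
          ν * (pD - phat) := by
        rw [hdiff, mul_div_assoc', div_lt_iff₀ hL2]
        nlinarith [key, hA0]
      linarith
    have hcmp := hmax phat hphat0
    rw [hh pD, hh phat] at hcmp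
    linarith
  constructor
  · exact Real.rpow_le_rpow (by nlinarith) (by nlinarith) hμu.le
  · have hP : ∏ j ∈ S, (1 + γ j / (1 + pD * F j)) ^ μg ≤ ∏ j ∈ S, (1 + γ j) ^ μg := by
      apply Finset.prod_le_prod
      · intro j hj
        have hd2 : (0:ℝ) < 1 + pD * F j := by nlinarith [hF j hj]
        have : 0 ≤ γ j / (1 + pD * F j) := div_nonneg (hγ j hj) hd2.le
        exact Real.rpow_nonneg (by linarith) _
      · intro j hj
        have hd2 : (1:ℝ) ≤ 1 + pD * F j := by nlinarith [hF j hj]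
        apply Real.rpow_le_rpow _ _ hμg
        · have : 0 ≤ γ j / (1 + pD * F j) := div_nonneg (hγ j hj) (by linarith)
          linarith
        · have := div_le_self (hγ j hj) hd2
          linarith
    have h2 : (2:ℝ) ^ (-(ν * pD)) ≤ 1 :=
      Real.rpow_le_one_of_one_le_of_nonpos one_le_two (by nlinarith)
    have hPn : 0 ≤ ∏ j ∈ S, (1 + γ j / (1 + pD * F j)) ^ μg := by
      apply Finset.prod_nonneg
      intro j hj
      exact Real.rpow_nonneg (by
        have hd2 : (0:ℝ) < 1 + pD * F j := by nlinarith [hF j hj]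
        have : 0 ≤ γ j / (1 + pD * F j) := div_nonneg (hγ j hj) hd2.le
        linarith) _
    calc (2:ℝ) ^ (-(ν * pD)) * ∏ j ∈ S, (1 + γ j / (1 + pD * F j)) ^ μg
        ≤ 1 * ∏ j ∈ S, (1 + γ j / (1 + pD * F j)) ^ μg :=
          mul_le_mul_of_nonneg_right h2 hPn
      _ = ∏ j ∈ S, (1 + γ j / (1 + pD * F j)) ^ μg := one_mul _
      _ ≤ ∏ j ∈ S, (1 + γ j) ^ μg := hP
end
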